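/- (Equipartition-type identity.) Let a be a weight, T > 0, and let y be a classical solution of the degenerate wave equation on [0,T] with y(t,c) = y(t,d) = 0 for all t ∈ [0,T], such that for every t ∈ [0,T] the one-sided limits lim_{x↗1} a(x)·∂_x y(t,x)·y(t,x) and lim_{x↘1} a(x)·∂_x y(t,x)·y(t,x) exist and are equal; assume there exists h ∈ L¹(c,d) dominating (∂_t y(t,x))² + a(x)·(∂_x y(t,x))² + |y(t,x)·∂_{tt} y(t,x)| + |y(t,x)·∂_t y(t,x)| for all (t,x) ∈ [0,T] × ((c,d) \ {1}). Then ∫_0^T ∫_{(c,d)} [ a(x)·(∂_x y(t,x))² − (∂_t y(t,x))² ] dx dt + ∫_{(c,d)} [ y(t,x)·∂_t y(t,x) ]_{t=0}^{t=T} dx = 0. -/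

import Mathlib

open MeasureTheory Set Filter Topology

noncomputable section

/-- A *weight* on `[c,d]` with degeneration point `1`. -/
structure IsWeight (c d : ℝ) (a a' : ℝ → ℝ) : Prop where
  cont : ContinuousOn a (Set.Icc c d)
  hderiv : ∀ x ∈ Set.Icc c d \ {1}, HasDerivWithinAt a (a' x) (Set.Icc c d \ {1}) x
  contDeriv : ContinuousOn a' (Set.Icc c d \ {1})
  zero_at_one : a 1 = 0
  pos : ∀ x ∈ Set.Icc c d \ {1}, 0 < a x

/-- A classical solution `y` of the degenerate wave equation
`∂_tt y = ∂_x (a ∂_x y)` on `[0,T] × ([c,1) ∪ (1,d])`, carrying its partial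
derivatives `yt = ∂_t y`, `yx = ∂_x y`, `ytt = ∂_tt y`, `ytx = ∂_x ∂_t y` and
`ww = ∂_x (a ∂_x y)`, all continuous on `[0,T] × ([c,1) ∪ (1,d])`. -/
structure ClassicalSolution (c d T : ℝ) (a : ℝ → ℝ)
    (y yt yx ytt ytx ww : ℝ → ℝ → ℝ) : Prop where
  dt : ∀ t ∈ Set.Icc (0:ℝ) T, ∀ x ∈ Set.Icc c d \ {1},
    HasDerivWithinAt (fun s => y s x) (yt t x) (Set.Icc 0 T) t
  dtt : ∀ t ∈ Set.Icc (0:ℝ) T, ∀ x ∈ Set.Icc c d \ {1},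
    HasDerivWithinAt (fun s => yt s x) (ytt t x) (Set.Icc 0 T) t
  dx : ∀ t ∈ Set.Icc (0:ℝ) T, ∀ x ∈ Set.Icc c d \ {1},
    HasDerivWithinAt (fun z => y t z) (yx t x) (Set.Icc c d \ {1}) x
  dtx : ∀ t ∈ Set.Icc (0:ℝ) T, ∀ x ∈ Set.Icc c d \ {1},
    HasDerivWithinAt (fun z => yt t z) (ytx t x) (Set.Icc c d \ {1}) x
  dax : ∀ t ∈ Set.Icc (0:ℝ) T, ∀ x ∈ Set.Icc c d \ {1},
    HasDerivWithinAt (fun z => a z * yx t z) (ww t x) (Set.Icc c d \ {1}) x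
  cy : ContinuousOn (fun p : ℝ × ℝ => y p.1 p.2) (Set.Icc 0 T ×ˢ (Set.Icc c d \ {1}))
  cyt : ContinuousOn (fun p : ℝ × ℝ => yt p.1 p.2) (Set.Icc 0 T ×ˢ (Set.Icc c d \ {1}))
  cyx : ContinuousOn (fun p : ℝ × ℝ => yx p.1 p.2) (Set.Icc 0 T ×ˢ (Set.Icc c d \ {1}))
  cytt : ContinuousOn (fun p : ℝ × ℝ => ytt p.1 p.2) (Set.Icc 0 T ×ˢ (Set.Icc c d \ {1}))
  cytx : ContinuousOn (fun p : ℝ × ℝ => ytx p.1 p.2) (Set.Icc 0 T ×ˢ (Set.Icc c d \ {1}))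
  cww : ContinuousOn (fun p : ℝ × ℝ => ww p.1 p.2) (Set.Icc 0 T ×ˢ (Set.Icc c d \ {1}))
  wave : ∀ t ∈ Set.Icc (0:ℝ) T, ∀ x ∈ Set.Ioo c d \ {1}, ytt t x = ww t x

private lemma sliceCont_x {T : ℝ} {f : ℝ → ℝ → ℝ} {S : Set ℝ}
    (hf : ContinuousOn (fun p : ℝ × ℝ => f p.1 p.2) (Set.Icc 0 T ×ˢ S))
    {t : ℝ} (ht : t ∈ Set.Icc (0:ℝ) T) :
    ContinuousOn (fun x => f t x) S :=
  hf.comp ((continuous_const.prodMk continuous_id).continuousOn) (fun _ hx => ⟨ht, hx⟩)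

private lemma sliceCont_t {T : ℝ} {f : ℝ → ℝ → ℝ} {S : Set ℝ}
    (hf : ContinuousOn (fun p : ℝ × ℝ => f p.1 p.2) (Set.Icc 0 T ×ˢ S))
    {x : ℝ} (hx : x ∈ S) :
    ContinuousOn (fun t => f t x) (Set.Icc (0:ℝ) T) :=
  hf.comp ((continuous_id.prodMk continuous_const).continuousOn) (fun _ ht => ⟨ht, hx⟩)

/-- Equipartition-type identity. -/
theorem stmt_18 (c d T : ℝ) (a a' : ℝ → ℝ) (h : ℝ → ℝ)
    (y yt yx ytt ytx ww : ℝ → ℝ → ℝ)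
    (hc : 0 ≤ c) (hc1 : c < 1) (h1d : 1 < d) (hd2 : d ≤ 2) (hT : 0 < T)
    (hw : IsWeight c d a a')
    (hsol : ClassicalSolution c d T a y yt yx ytt ytx ww)
    (hbc : ∀ t ∈ Set.Icc (0:ℝ) T, y t c = 0 ∧ y t d = 0)
    (htrans : ∀ t ∈ Set.Icc (0:ℝ) T, ∃ L : ℝ,
      Filter.Tendsto (fun x => a x * yx t x * y t x) (𝓝[<] 1) (𝓝 L) ∧
      Filter.Tendsto (fun x => a x * yx t x * y t x) (𝓝[>] 1) (𝓝 L))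
    (hhint : MeasureTheory.IntegrableOn h (Set.Ioo c d))
    (hdom : ∀ t ∈ Set.Icc (0:ℝ) T, ∀ x ∈ Set.Ioo c d \ {1},
      (yt t x) ^ 2 + a x * (yx t x) ^ 2 + |y t x * ytt t x| + |y t x * yt t x| ≤ h x) :
    (∫ t in (0:ℝ)..T, ∫ x in Set.Ioo c d,
        (a x * (yx t x) ^ 2 - (yt t x) ^ 2))
      + (∫ x in Set.Ioo c d, (y T x * yt T x - y 0 x * yt 0 x)) = 0 := by
  classical
  set S : Set ℝ := Set.Icc c d \ {1} with hS
  set U : Set ℝ := Set.Ioo c d \ {1} with hU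
  have hcd : c < d := hc1.trans h1d
  have hUS : U ⊆ S := fun x hx => ⟨Ioo_subset_Icc_self hx.1, hx.2⟩
  have hUopen : IsOpen U := isOpen_Ioo.sdiff isClosed_singleton
  have hUmeas : MeasurableSet U := hUopen.measurableSet
  have hUae : U =ᵐ[volume] Set.Ioo c d := by
    refine MeasureTheory.diff_ae_eq_self.mpr ?_
    exact measure_mono_null Set.inter_subset_right Real.volume_singleton
  have hrestr : volume.restrict U = volume.restrict (Set.Ioo c d) :=
    Measure.restrict_congr_set hUae
  have haemem : ∀ᵐ x ∂volume.restrict (Set.Ioo c d), x ∈ U := by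
    rw [← hrestr]; exact ae_restrict_mem hUmeas
  -- special case: if x ∈ U, the set S is a neighborhood of x
  have hSnhds : ∀ x ∈ U, S ∈ 𝓝 x := fun x hx =>
    mem_nhds_iff.mpr ⟨U, hUS, hUopen, hx⟩
  -- a.e. strong measurability of slices
  have hmeas : ∀ {f : ℝ → ℝ}, ContinuousOn f S →
      AEStronglyMeasurable f (volume.restrict (Set.Ioo c d)) := by
    intro f hf
    rw [← hrestr]
    exact (hf.mono hUS).aestronglyMeasurable hUmeas
  -- integrability of h
  have hint' : Integrable h (volume.restrict (Set.Ioo c d)) := hhint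
  -- positivity of a on U
  have hapos : ∀ x ∈ U, 0 < a x := fun x hx => hw.pos x (hUS hx)
  -- slice continuity lemmas
  have cfy : ∀ t ∈ Set.Icc (0:ℝ) T, ContinuousOn (fun x => y t x) S :=
    fun t ht => sliceCont_x hsol.cy ht
  have cfyt : ∀ t ∈ Set.Icc (0:ℝ) T, ContinuousOn (fun x => yt t x) S :=
    fun t ht => sliceCont_x hsol.cyt ht
  have cfyx : ∀ t ∈ Set.Icc (0:ℝ) T, ContinuousOn (fun x => yx t x) S :=
    fun t ht => sliceCont_x hsol.cyx ht
  have cfytt : ∀ t ∈ Set.Icc (0:ℝ) T, ContinuousOn (fun x => ytt t x) S :=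
    fun t ht => sliceCont_x hsol.cytt ht
  have haS : ContinuousOn a S := hw.cont.mono diff_subset
  -- the three integrands and their integrability for each t
  set f1 : ℝ → ℝ → ℝ := fun t x => y t x * yt t x with hf1
  set f2 : ℝ → ℝ → ℝ := fun t x => yt t x ^ 2 + y t x * ytt t x with hf2
  set f3 : ℝ → ℝ → ℝ := fun t x => a x * yx t x ^ 2 - yt t x ^ 2 with hf3
  set f4 : ℝ → ℝ → ℝ := fun t x => a x * yx t x ^ 2 + y t x * ytt t x with hf4
  have hm1 : ∀ t ∈ Set.Icc (0:ℝ) T,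
      AEStronglyMeasurable (f1 t) (volume.restrict (Set.Ioo c d)) :=
    fun t ht => hmeas ((cfy t ht).mul (cfyt t ht))
  have hm2 : ∀ t ∈ Set.Icc (0:ℝ) T,
      AEStronglyMeasurable (f2 t) (volume.restrict (Set.Ioo c d)) :=
    fun t ht => hmeas (((cfyt t ht).pow 2).add ((cfy t ht).mul (cfytt t ht)))
  have hm3 : ∀ t ∈ Set.Icc (0:ℝ) T,
      AEStronglyMeasurable (f3 t) (volume.restrict (Set.Ioo c d)) :=
    fun t ht => hmeas ((haS.mul ((cfyx t ht).pow 2)).sub ((cfyt t ht).pow 2))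
  have hm4 : ∀ t ∈ Set.Icc (0:ℝ) T,
      AEStronglyMeasurable (f4 t) (volume.restrict (Set.Ioo c d)) :=
    fun t ht => hmeas ((haS.mul ((cfyx t ht).pow 2)).add ((cfy t ht).mul (cfytt t ht)))
  -- pointwise bounds
  have hb1 : ∀ t ∈ Set.Icc (0:ℝ) T, ∀ x ∈ U, ‖f1 t x‖ ≤ h x := by
    intro t ht x hx
    have := hdom t ht x hx
    have h1 : (0:ℝ) ≤ yt t x ^ 2 := sq_nonneg _
    have h2 : (0:ℝ) ≤ a x * yx t x ^ 2 := mul_nonneg (hapos x hx).le (sq_nonneg _)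
    have h3 : (0:ℝ) ≤ |y t x * ytt t x| := abs_nonneg _
    simp only [f1, Real.norm_eq_abs]
    linarith
  have hb2 : ∀ t ∈ Set.Icc (0:ℝ) T, ∀ x ∈ U, ‖f2 t x‖ ≤ h x := by
    intro t ht x hx
    have := hdom t ht x hx
    have h2 : (0:ℝ) ≤ a x * yx t x ^ 2 := mul_nonneg (hapos x hx).le (sq_nonneg _)
    have h4 : (0:ℝ) ≤ |y t x * yt t x| := abs_nonneg _
    have : |f2 t x| ≤ yt t x ^ 2 + |y t x * ytt t x| := by
      simp only [f2]
      calc |yt t x ^ 2 + y t x * ytt t x| ≤ |yt t x ^ 2| + |y t x * ytt t x| := abs_add_le _ _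
        _ = yt t x ^ 2 + |y t x * ytt t x| := by rw [abs_of_nonneg (sq_nonneg _)]
    simp only [Real.norm_eq_abs]
    linarith [hdom t ht x hx]
  have hb3 : ∀ t ∈ Set.Icc (0:ℝ) T, ∀ x ∈ U, ‖f3 t x‖ ≤ h x := by
    intro t ht x hx
    have := hdom t ht x hx
    have h2 : (0:ℝ) ≤ a x * yx t x ^ 2 := mul_nonneg (hapos x hx).le (sq_nonneg _)
    have h1 : (0:ℝ) ≤ yt t x ^ 2 := sq_nonneg _
    have h3 : (0:ℝ) ≤ |y t x * ytt t x| := abs_nonneg _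
    have h4 : (0:ℝ) ≤ |y t x * yt t x| := abs_nonneg _
    simp only [f3, Real.norm_eq_abs]
    rw [abs_sub_le_iff]
    constructor <;> linarith
  have hb4 : ∀ t ∈ Set.Icc (0:ℝ) T, ∀ x ∈ U, ‖f4 t x‖ ≤ h x := by
    intro t ht x hx
    have := hdom t ht x hx
    have h1 : (0:ℝ) ≤ yt t x ^ 2 := sq_nonneg _
    have h2 : (0:ℝ) ≤ a x * yx t x ^ 2 := mul_nonneg (hapos x hx).le (sq_nonneg _)
    have h4 : (0:ℝ) ≤ |y t x * yt t x| := abs_nonneg _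
    have : |f4 t x| ≤ a x * yx t x ^ 2 + |y t x * ytt t x| := by
      simp only [f4]
      calc |a x * yx t x ^ 2 + y t x * ytt t x|
          ≤ |a x * yx t x ^ 2| + |y t x * ytt t x| := abs_add_le _ _
        _ = a x * yx t x ^ 2 + |y t x * ytt t x| := by rw [abs_of_nonneg h2]
    simp only [Real.norm_eq_abs]
    linarith
  have hint1 : ∀ t ∈ Set.Icc (0:ℝ) T, Integrable (f1 t) (volume.restrict (Set.Ioo c d)) :=
    fun t ht => hint'.mono' (hm1 t ht) (haemem.mono fun x hx => hb1 t ht x hx)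
  have hint2 : ∀ t ∈ Set.Icc (0:ℝ) T, Integrable (f2 t) (volume.restrict (Set.Ioo c d)) :=
    fun t ht => hint'.mono' (hm2 t ht) (haemem.mono fun x hx => hb2 t ht x hx)
  have hint3 : ∀ t ∈ Set.Icc (0:ℝ) T, Integrable (f3 t) (volume.restrict (Set.Ioo c d)) :=
    fun t ht => hint'.mono' (hm3 t ht) (haemem.mono fun x hx => hb3 t ht x hx)
  have hint4 : ∀ t ∈ Set.Icc (0:ℝ) T, Integrable (f4 t) (volume.restrict (Set.Ioo c d)) :=
    fun t ht => hint'.mono' (hm4 t ht) (haemem.mono fun x hx => hb4 t ht x hx)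
  -- Step 1: for each t, ∫ f4 t = 0 (integration by parts)
  have hK : ∀ t ∈ Set.Icc (0:ℝ) T, (∫ x in Set.Ioo c d, f4 t x) = 0 := by
    intro t ht
    obtain ⟨L, hL1, hL2⟩ := htrans t ht
    set g : ℝ → ℝ := fun x => a x * yx t x * y t x with hg
    -- derivative of g on U
    have hgd : ∀ x ∈ U, HasDerivAt g (f4 t x) x := by
      intro x hx
      have h1 : HasDerivWithinAt (fun z => (a z * yx t z) * y t z)
          (ww t x * y t x + (a x * yx t x) * yx t x) S x :=
        (hsol.dax t ht x (hUS hx)).mul (hsol.dx t ht x (hUS hx))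
      have h2 : HasDerivAt g (ww t x * y t x + (a x * yx t x) * yx t x) x :=
        h1.hasDerivAt (hSnhds x hx)
      have hwav : ytt t x = ww t x := hsol.wave t ht x hx
      have : f4 t x = ww t x * y t x + (a x * yx t x) * yx t x := by
        simp only [f4, hwav]; ring
      rw [this]; exact h2
    -- continuity of g on S
    have hgc : ContinuousOn g S := (haS.mul (cfyx t ht)).mul (cfy t ht)
    -- limits at c, d, 1
    have hcS : c ∈ S := ⟨⟨le_refl c, hcd.le⟩, by simp [hc1.ne]⟩
    have hdS : d ∈ S := ⟨⟨hcd.le, le_refl d⟩, by simp [h1d.ne']⟩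
    have hIoo1S : Set.Ioo c 1 ⊆ S := fun x hx =>
      ⟨⟨hx.1.le, (hx.2.trans h1d).le⟩, hx.2.ne⟩
    have hIoo2S : Set.Ioo 1 d ⊆ S := fun x hx =>
      ⟨⟨(hc1.trans hx.1).le, hx.2.le⟩, hx.1.ne'⟩
    have hgc0 : Tendsto g (𝓝[>] c) (𝓝 0) := by
      have h0 : g c = 0 := by simp [g, (hbc t ht).1]
      have := (hgc c hcS).tendsto
      rw [h0] at this
      exact this.mono_left (nhdsWithin_le_iff.mpr
        (mem_of_superset (Ioo_mem_nhdsGT_of_mem ⟨le_refl c, hc1⟩) hIoo1S))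
    have hgd0 : Tendsto g (𝓝[<] d) (𝓝 0) := by
      have h0 : g d = 0 := by simp [g, (hbc t ht).2]
      have := (hgc d hdS).tendsto
      rw [h0] at this
      exact this.mono_left (nhdsWithin_le_iff.mpr
        (mem_of_superset (Ioo_mem_nhdsLT_of_mem ⟨h1d, le_refl d⟩) hIoo2S))
    -- integrability on the two pieces
    have hI4 : IntegrableOn (f4 t) (Set.Ioo c d) := hint4 t ht
    have hIa : IntervalIntegrable (f4 t) volume c 1 := by
      rw [intervalIntegrable_iff_integrableOn_Ioo_of_le hc1.le]
      exact hI4.mono_set (Ioo_subset_Ioo le_rfl h1d.le)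
    have hIb : IntervalIntegrable (f4 t) volume 1 d := by
      rw [intervalIntegrable_iff_integrableOn_Ioo_of_le h1d.le]
      exact hI4.mono_set (Ioo_subset_Ioo hc1.le le_rfl)
    have e1 : (∫ x in c..1, f4 t x) = L - 0 := by
      apply intervalIntegral.integral_eq_sub_of_hasDerivAt_of_tendsto hc1
        (fun x hx => hgd x ⟨⟨hx.1, hx.2.trans h1d⟩, hx.2.ne⟩) hIa hgc0 hL1
    have e2 : (∫ x in (1:ℝ)..d, f4 t x) = 0 - L := by
      apply intervalIntegral.integral_eq_sub_of_hasDerivAt_of_tendsto h1d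
        (fun x hx => hgd x ⟨⟨hc1.trans hx.1, hx.2⟩, hx.1.ne'⟩) hIb hL2 hgd0
    have e3 : (∫ x in c..d, f4 t x) = (∫ x in c..1, f4 t x) + ∫ x in (1:ℝ)..d, f4 t x :=
      (intervalIntegral.integral_add_adjacent_intervals hIa hIb).symm
    have e4 : (∫ x in Set.Ioo c d, f4 t x) = ∫ x in c..d, f4 t x := by
      rw [intervalIntegral.integral_of_le hcd.le, MeasureTheory.integral_Ioc_eq_integral_Ioo]
    rw [e4, e3, e1, e2]; ring
  -- Step 2: for each t, ∫ f3 t = - ∫ f2 t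
  have hPhi : ∀ t ∈ Set.Icc (0:ℝ) T,
      (∫ x in Set.Ioo c d, f3 t x) = -(∫ x in Set.Ioo c d, f2 t x) := by
    intro t ht
    have hadd : (∫ x in Set.Ioo c d, f3 t x) + (∫ x in Set.Ioo c d, f2 t x)
        = ∫ x in Set.Ioo c d, f4 t x := by
      rw [← integral_add (hint3 t ht) (hint2 t ht)]
      apply integral_congr_ae
      filter_upwards with x
      simp only [f2, f3, f4]; ring
    have := hK t ht
    linarith [hadd, this]
  -- define F
  set F : ℝ → ℝ := fun t => ∫ x in Set.Ioo c d, f1 t x with hF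
  -- Step 3: derivative of F at interior points
  have hFderiv : ∀ t ∈ Set.Ioo (0:ℝ) T,
      HasDerivAt F (∫ x in Set.Ioo c d, f2 t x) t := by
    intro t₀ ht₀
    have ht₀' : t₀ ∈ Set.Icc (0:ℝ) T := Ioo_subset_Icc_self ht₀
    set ε : ℝ := min t₀ (T - t₀) with hε
    have hεpos : 0 < ε := lt_min ht₀.1 (by linarith [ht₀.2])
    have hball : Metric.ball t₀ ε ⊆ Set.Ioo 0 T := by
      intro s hs
      rw [Metric.mem_ball, Real.dist_eq, abs_sub_lt_iff] at hs
      constructor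
      · have : s - t₀ > -ε := by linarith [hs.2]
        have hε1 : ε ≤ t₀ := min_le_left _ _
        linarith
      · have hε2 : ε ≤ T - t₀ := min_le_right _ _
        linarith [hs.1]
    have key := hasDerivAt_integral_of_dominated_loc_of_deriv_le
      (F := fun s x => f1 s x) (F' := fun s x => f2 s x)
      (μ := volume.restrict (Set.Ioo c d)) (x₀ := t₀) (bound := h) (Metric.ball_mem_nhds t₀ hεpos)
      ?_ (hint1 t₀ ht₀') (hm2 t₀ ht₀') ?_ hint' ?_
    · exact key.2
    · filter_upwards [IsOpen.mem_nhds isOpen_Ioo ht₀] with s hs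
      exact hm1 s (Ioo_subset_Icc_self hs)
    · filter_upwards [haemem] with x hx
      intro s hs
      exact hb2 s (Ioo_subset_Icc_self (hball hs)) x hx
    · filter_upwards [haemem] with x hx
      intro s hs
      have hs' : s ∈ Set.Ioo (0:ℝ) T := hball hs
      have hs'' : s ∈ Set.Icc (0:ℝ) T := Ioo_subset_Icc_self hs'
      have hnhds : Set.Icc (0:ℝ) T ∈ 𝓝 s :=
        mem_nhds_iff.mpr ⟨Set.Ioo 0 T, Ioo_subset_Icc_self, isOpen_Ioo, hs'⟩
      have h1 : HasDerivAt (fun s => y s x) (yt s x) s :=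
        (hsol.dt s hs'' x (hUS hx)).hasDerivAt hnhds
      have h2 : HasDerivAt (fun s => yt s x) (ytt s x) s :=
        (hsol.dtt s hs'' x (hUS hx)).hasDerivAt hnhds
      have := h1.mul h2
      simp only [f1, f2]
      rw [pow_two]
      exact this
  -- Step 4: continuity of F on [0,T]
  have hFcont : ContinuousOn F (Set.Icc 0 T) := by
    intro t₀ ht₀
    apply MeasureTheory.continuousWithinAt_of_dominated (bound := h)
    · filter_upwards [self_mem_nhdsWithin] with s hs
      exact hm1 s hs
    · filter_upwards [self_mem_nhdsWithin] with s hs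
      filter_upwards [haemem] with x hx
      exact hb1 s hs x hx
    · exact hint'
    · filter_upwards [haemem] with x hx
      have c1 := sliceCont_t hsol.cy (hUS hx)
      have c2 := sliceCont_t hsol.cyt (hUS hx)
      exact ((c1.mul c2) t₀ ht₀)
  -- Step 5: continuity of Φ on [0,T]
  set Φ : ℝ → ℝ := fun t => ∫ x in Set.Ioo c d, f3 t x with hΦ
  have hΦcont : ContinuousOn Φ (Set.Icc 0 T) := by
    intro t₀ ht₀
    apply MeasureTheory.continuousWithinAt_of_dominated (bound := h)
    · filter_upwards [self_mem_nhdsWithin] with s hs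
      exact hm3 s hs
    · filter_upwards [self_mem_nhdsWithin] with s hs
      filter_upwards [haemem] with x hx
      exact hb3 s hs x hx
    · exact hint'
    · filter_upwards [haemem] with x hx
      have c2 := sliceCont_t hsol.cyt (hUS hx)
      have c3 := sliceCont_t hsol.cyx (hUS hx)
      have : ContinuousOn (fun s => f3 s x) (Set.Icc (0:ℝ) T) :=
        (continuousOn_const.mul (c3.pow 2)).sub (c2.pow 2)
      exact this t₀ ht₀
  have hΦint : IntervalIntegrable Φ volume 0 T :=
    (hΦcont.mono (by rw [uIcc_of_le hT.le])).intervalIntegrable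
  -- Step 6: FTC in time
  have hFTC : (∫ t in (0:ℝ)..T, (-Φ t)) = F T - F 0 := by
    apply intervalIntegral.integral_eq_sub_of_hasDerivAt_of_le hT.le hFcont
    · intro t htt
      have := hFderiv t htt
      have heq : (∫ x in Set.Ioo c d, f2 t x) = -Φ t := by
        have := hPhi t (Ioo_subset_Icc_self htt)
        simp only [Φ]
        linarith
      rw [← heq]; exact this
    · exact hΦint.neg
  have hΦeq : (∫ t in (0:ℝ)..T, Φ t) = F 0 - F T := by
    have := hFTC
    rw [intervalIntegral.integral_neg] at this
    linarith
  -- Step 7: assemble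
  have hlast : (∫ x in Set.Ioo c d, (y T x * yt T x - y 0 x * yt 0 x)) = F T - F 0 := by
    rw [show (fun x => y T x * yt T x - y 0 x * yt 0 x) = fun x => f1 T x - f1 0 x from rfl]
    rw [integral_sub (hint1 T ⟨hT.le, le_refl T⟩) (hint1 0 ⟨le_refl 0, hT.le⟩)]
  have hgoal1 : (∫ t in (0:ℝ)..T, ∫ x in Set.Ioo c d,
      (a x * (yx t x) ^ 2 - (yt t x) ^ 2)) = ∫ t in (0:ℝ)..T, Φ t := rfl
  rw [hgoal1, hΦeq, hlast]
  ring

end
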